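/- Universal approximation with full-rank output matrix: Let d, l ≥ 1 be natural numbers, let U ⊆ ℝ^d be compact, let h : ℝ^d → ℝ^l be continuous, and let ε > 0. Then there exist n ∈ ℕ with n ≥ l and parameters A ∈ ℝ^{l×n}, B ∈ ℝ^{n×d}, b ∈ ℝ^n such that the matrix A has rank l and ∫_U ‖h(x) − A·ReLU(Bx + b)‖ dx ≤ ε, where the integral is with respect to Lebesgue measure on ℝ^d. -/

import Mathlib

open MeasureTheory

/-- The ReLU activation function. -/
noncomputable def relu (t : ℝ) : ℝ := max t 0

/-!
Linear combinations of the exponential ridge functions `x ↦ exp (ℓ x + b)` form an algebra that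
separates points, so by Stone–Weierstrass they approximate every coordinate of `h` uniformly on
`U`. Each of them is a continuous function of the single real variable `ℓ x + b`, which ranges
over a compact interval; there it is uniformly close to its piecewise-linear interpolant, and
that interpolant is a combination of ReLUs. Stacking the coordinate networks and appending `l`
dead hidden units (zero weights and bias, so they output `relu 0 = 0`) whose output block is the
identity makes `A` surjective, hence of rank `l`, without changing the network. A uniform error
`δ` per coordinate bounds the integral by `l * δ * vol U`.
-/

open Finset Set Matrix

namespace Submodule

variable {X : Type*}

def uniformClosureOn (S : Submodule ℝ (X → ℝ)) (U : Set X) : Submodule ℝ (X → ℝ) where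
  carrier := {g | ∀ δ > 0, ∃ f ∈ S, ∀ x ∈ U, |g x - f x| < δ}
  zero_mem' δ hδ := ⟨0, S.zero_mem, fun _ _ => by simpa using hδ⟩
  add_mem' {g₁ g₂} h₁ h₂ δ hδ := by
    obtain ⟨f₁, hf₁, hfg₁⟩ := h₁ (δ / 2) (half_pos hδ)
    obtain ⟨f₂, hf₂, hfg₂⟩ := h₂ (δ / 2) (half_pos hδ)
    refine ⟨f₁ + f₂, S.add_mem hf₁ hf₂, fun x hx => ?_⟩
    calc |(g₁ + g₂) x - (f₁ + f₂) x| = |(g₁ x - f₁ x) + (g₂ x - f₂ x)| := by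
          simp only [Pi.add_apply]; ring_nf
      _ ≤ |g₁ x - f₁ x| + |g₂ x - f₂ x| := abs_add_le _ _
      _ < δ / 2 + δ / 2 := add_lt_add (hfg₁ x hx) (hfg₂ x hx)
      _ = δ := add_halves δ
  smul_mem' c g hg δ hδ := by
    obtain ⟨f, hf, hfg⟩ := hg (δ / (|c| + 1)) (by positivity)
    refine ⟨c • f, S.smul_mem c hf, fun x hx => ?_⟩
    calc |(c • g) x - (c • f) x| = |c| * |g x - f x| := by
          simp only [Pi.smul_apply, smul_eq_mul, ← mul_sub, abs_mul]
      _ ≤ |c| * (δ / (|c| + 1)) := by gcongr; exact (hfg x hx).le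
      _ < (|c| + 1) * (δ / (|c| + 1)) := by gcongr; linarith
      _ = δ := mul_div_cancel₀ δ (by positivity)

theorem uniformClosureOn_le_of_le {S T : Submodule ℝ (X → ℝ)} {U : Set X}
    (hST : S ≤ T.uniformClosureOn U) : S.uniformClosureOn U ≤ T.uniformClosureOn U := by
  intro g hg δ hδ
  obtain ⟨f, hf, hgf⟩ := hg (δ / 2) (half_pos hδ)
  obtain ⟨F, hF, hfF⟩ := hST hf (δ / 2) (half_pos hδ)
  refine ⟨F, hF, fun x hx => ?_⟩
  calc |g x - F x| ≤ |g x - f x| + |f x - F x| := abs_sub_le _ _ _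
    _ < δ / 2 + δ / 2 := add_lt_add (hgf x hx) (hfF x hx)
    _ = δ := add_halves δ

end Submodule

section RidgeSpan

variable {E F : Type*} [AddCommGroup E] [Module ℝ E] [AddCommGroup F] [Module ℝ F]

/-- The functions computed by one-hidden-layer networks with activation `σ` and scalar output. -/
def ridgeSpan (σ : ℝ → ℝ) (E : Type*) [AddCommGroup E] [Module ℝ E] : Submodule ℝ (E → ℝ) :=
  Submodule.span ℝ (range fun p : Module.Dual ℝ E × ℝ => fun x => σ (p.1 x + p.2))

theorem ridge_mem_ridgeSpan (σ : ℝ → ℝ) (ℓ : Module.Dual ℝ E) (b : ℝ) :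
    (fun x => σ (ℓ x + b)) ∈ ridgeSpan σ E :=
  Submodule.subset_span ⟨(ℓ, b), rfl⟩

theorem comp_add_mem_ridgeSpan {σ : ℝ → ℝ} (T : E →ₗ[ℝ] F) (c : F) {f : F → ℝ}
    (hf : f ∈ ridgeSpan σ F) : (fun x => f (T x + c)) ∈ ridgeSpan σ E := by
  suffices ridgeSpan σ F ≤ (ridgeSpan σ E).comap (LinearMap.funLeft ℝ ℝ fun x => T x + c) from
    this hf
  refine Submodule.span_le.2 ?_
  rintro _ ⟨⟨ℓ, b⟩, rfl⟩
  simpa [LinearMap.funLeft, Function.comp_def, add_assoc] using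
    ridge_mem_ridgeSpan σ (ℓ ∘ₗ T) (ℓ c + b)

theorem comp_add_mem_uniformClosureOn_ridgeSpan {σ : ℝ → ℝ} {φ : F → ℝ} {U : Set E} {V : Set F}
    (T : E →ₗ[ℝ] F) (c : F) (hUV : MapsTo (fun x => T x + c) U V)
    (hφ : φ ∈ (ridgeSpan σ F).uniformClosureOn V) :
    (fun x => φ (T x + c)) ∈ (ridgeSpan σ E).uniformClosureOn U := by
  intro δ hδ
  obtain ⟨f, hf, hφf⟩ := hφ δ hδ
  exact ⟨_, comp_add_mem_ridgeSpan T c hf, fun x hx => hφf _ (hUV hx)⟩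

end RidgeSpan

section Interpolation

theorem relu_of_nonneg {t : ℝ} (ht : 0 ≤ t) : relu t = t := max_eq_left ht

theorem relu_of_nonpos {t : ℝ} (ht : t ≤ 0) : relu t = 0 := max_eq_right ht

theorem const_mem_ridgeSpan_relu {E : Type*} [AddCommGroup E] [Module ℝ E] (c : ℝ) :
    (fun _ => c) ∈ ridgeSpan relu E := by
  convert (ridgeSpan relu E).smul_mem c (ridge_mem_ridgeSpan relu 0 1) using 1
  ext; simp [relu_of_nonneg zero_le_one]

theorem relu_sub_mem_ridgeSpan (t : ℝ) : (fun s => relu (s - t)) ∈ ridgeSpan relu ℝ := by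
  simpa [sub_eq_add_neg] using ridge_mem_ridgeSpan relu LinearMap.id (-t)

/-- The piecewise-linear interpolant of `φ` at the nodes `t 0 ≤ ⋯ ≤ t m`: the `j`-th summand
is a ramp rising from `0` at `t j` to `φ (t (j + 1)) - φ (t j)` at `t (j + 1)`. -/
noncomputable def pwLinearInterp (φ : ℝ → ℝ) (t : ℕ → ℝ) (m : ℕ) (s : ℝ) : ℝ :=
  φ (t 0) + ∑ j ∈ range m, slope φ (t j) (t (j + 1)) * (relu (s - t j) - relu (s - t (j + 1)))

variable {φ : ℝ → ℝ} {t : ℕ → ℝ} {m : ℕ} {s : ℝ}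

theorem pwLinearInterp_mem_ridgeSpan (φ : ℝ → ℝ) (t : ℕ → ℝ) (m : ℕ) :
    pwLinearInterp φ t m ∈ ridgeSpan relu ℝ := by
  have : pwLinearInterp φ t m = (fun _ => φ (t 0)) + ∑ j ∈ range m,
      slope φ (t j) (t (j + 1)) • ((fun s => relu (s - t j)) - fun s => relu (s - t (j + 1))) := by
    ext s; simp [pwLinearInterp, Finset.sum_apply]
  rw [this]
  exact add_mem (const_mem_ridgeSpan_relu _) <| Submodule.sum_mem _ fun j _ =>
    Submodule.smul_mem _ _ <| sub_mem (relu_sub_mem_ridgeSpan _) (relu_sub_mem_ridgeSpan _)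

theorem pwLinearInterp_of_le (ht : Monotone t) (hs : t m ≤ s) :
    pwLinearInterp φ t m s = φ (t m) := by
  have hstep : ∀ j ∈ range m, slope φ (t j) (t (j + 1)) * (relu (s - t j) - relu (s - t (j + 1)))
      = φ (t (j + 1)) - φ (t j) := by
    intro j hj
    have hj : j + 1 ≤ m := mem_range.1 hj
    rw [relu_of_nonneg (sub_nonneg.2 ((ht (by omega)).trans hs)),
      relu_of_nonneg (sub_nonneg.2 ((ht hj).trans hs)), sub_sub_sub_cancel_left, mul_comm]
    exact sub_smul_slope φ _ _
  rw [pwLinearInterp, sum_congr rfl hstep, sum_range_sub (fun j => φ (t j)), add_sub_cancel]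

theorem pwLinearInterp_succ_of_le (ht : Monotone t) (hs : s ≤ t m) :
    pwLinearInterp φ t (m + 1) s = pwLinearInterp φ t m s := by
  rw [pwLinearInterp, sum_range_succ, relu_of_nonpos (sub_nonpos.2 hs),
    relu_of_nonpos (sub_nonpos.2 (hs.trans (ht m.le_succ))), sub_zero, mul_zero, add_zero,
    pwLinearInterp]

theorem pwLinearInterp_succ_of_ge (ht : Monotone t) (hs : s ∈ Icc (t m) (t (m + 1))) :
    pwLinearInterp φ t (m + 1) s = φ (t m) + slope φ (t m) (t (m + 1)) * (s - t m) := by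
  rw [pwLinearInterp, sum_range_succ, ← add_assoc, ← pwLinearInterp, pwLinearInterp_of_le ht hs.1,
    relu_of_nonneg (sub_nonneg.2 hs.1), relu_of_nonpos (sub_nonpos.2 hs.2), sub_zero]

/-- The chord of `φ` over `[a, b]` takes values between `φ a` and `φ b`, and balls are convex. -/
theorem abs_sub_add_slope_mul_lt {a b δ : ℝ} (hs : s ∈ Icc a b) (ha : |φ s - φ a| < δ)
    (hb : |φ s - φ b| < δ) : |φ s - (φ a + slope φ a b * (s - a))| < δ := by
  have hab : 0 ≤ b - a := sub_nonneg.2 (hs.1.trans hs.2)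
  have hθ : (s - a) / (b - a) ∈ Icc (0 : ℝ) 1 :=
    ⟨div_nonneg (sub_nonneg.2 hs.1) hab, div_le_one_of_le₀ (by linarith [hs.2]) hab⟩
  have hmem := (convex_ball (φ s) δ).add_smul_sub_mem (x := φ a) (y := φ b)
    (by rwa [Metric.mem_ball, Real.dist_eq, abs_sub_comm])
    (by rwa [Metric.mem_ball, Real.dist_eq, abs_sub_comm]) hθ
  rw [Metric.mem_ball, Real.dist_eq, abs_sub_comm, smul_eq_mul] at hmem
  convert hmem using 4
  rw [slope_def_field]; ring

theorem abs_sub_pwLinearInterp_lt {δ : ℝ} (ht : Monotone t) (hδ : 0 < δ)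
    (hosc : ∀ j < m, ∀ s ∈ Icc (t j) (t (j + 1)), ∀ s' ∈ Icc (t j) (t (j + 1)), |φ s - φ s'| < δ) :
    ∀ s ∈ Icc (t 0) (t m), |φ s - pwLinearInterp φ t m s| < δ := by
  induction m with
  | zero =>
    rintro s ⟨hs₀, hs₁⟩
    simpa [le_antisymm hs₁ hs₀, pwLinearInterp] using hδ
  | succ m ih =>
    rintro s ⟨hs₀, hs₁⟩
    rcases le_total s (t m) with hsm | hsm
    · rw [pwLinearInterp_succ_of_le ht hsm]
      exact ih (fun j hj => hosc j (by omega)) s ⟨hs₀, hsm⟩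
    · have hcell : ∀ s' ∈ Icc (t m) (t (m + 1)), |φ s - φ s'| < δ :=
        hosc m m.lt_succ_self s ⟨hsm, hs₁⟩
      rw [pwLinearInterp_succ_of_ge ht ⟨hsm, hs₁⟩]
      exact abs_sub_add_slope_mul_lt ⟨hsm, hs₁⟩ (hcell _ ⟨le_rfl, ht m.le_succ⟩)
        (hcell _ ⟨ht m.le_succ, le_rfl⟩)

theorem mem_uniformClosureOn_ridgeSpan_relu_Icc {a c : ℝ} (hφ : ContinuousOn φ (Icc a c)) :
    φ ∈ (ridgeSpan relu ℝ).uniformClosureOn (Icc a c) := by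
  intro δ hδ
  rcases lt_or_ge c a with hca | hac
  · exact ⟨0, zero_mem _, fun s hs => absurd (hs.1.trans hs.2) hca.not_ge⟩
  obtain ⟨r, hr, hφr⟩ := Metric.uniformContinuousOn_iff.1
    (isCompact_Icc.uniformContinuousOn_of_continuous hφ) δ hδ
  obtain ⟨m, hm⟩ := exists_nat_gt ((c - a) / r)
  have hm₀ : (0 : ℝ) < m := (div_nonneg (sub_nonneg.2 hac) hr.le).trans_lt hm
  set t : ℕ → ℝ := fun j => a + j * ((c - a) / m) with ht_def
  have ht : Monotone t := fun i j hij => by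
    have : 0 ≤ (c - a) / m := div_nonneg (sub_nonneg.2 hac) hm₀.le
    simp only [ht_def]; gcongr
  have ht₀ : t 0 = a := by simp [ht_def]
  have htm : t m = c := by simp only [ht_def]; field_simp; ring
  have hstep : ∀ j, t (j + 1) - t j < r := fun j => by
    simp only [ht_def]; push_cast
    rw [show a + (j + 1) * ((c - a) / m) - (a + j * ((c - a) / m)) = (c - a) / m by ring,
      div_lt_iff₀ hm₀, mul_comm, ← div_lt_iff₀ hr]
    exact hm
  refine ⟨pwLinearInterp φ t m, pwLinearInterp_mem_ridgeSpan φ t m, fun s hs => ?_⟩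
  refine abs_sub_pwLinearInterp_lt ht hδ (fun j hj s hs s' hs' => ?_) s (by rwa [ht₀, htm])
  have hsub : Icc (t j) (t (j + 1)) ⊆ Icc a c := by
    rw [← ht₀, ← htm]; exact Icc_subset_Icc (ht j.zero_le) (ht hj)
  refine hφr s (hsub hs) s' (hsub hs') ?_
  rw [Real.dist_eq, abs_lt]
  constructor <;> linarith [hs.1, hs.2, hs'.1, hs'.2, hstep j]

end Interpolation

theorem ridgeSpan_exp_mul_mem {E : Type*} [AddCommGroup E] [Module ℝ E] {f g : E → ℝ}
    (hf : f ∈ ridgeSpan Real.exp E) (hg : g ∈ ridgeSpan Real.exp E) :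
    f * g ∈ ridgeSpan Real.exp E := by
  have hfg := Submodule.mul_mem_mul hf hg
  rw [ridgeSpan, Submodule.span_mul_span] at hfg
  refine Submodule.span_mono ?_ hfg
  refine Set.mul_subset_iff.2 ?_
  rintro _ ⟨⟨ℓ₁, b₁⟩, rfl⟩ _ ⟨⟨ℓ₂, b₂⟩, rfl⟩
  refine ⟨(ℓ₁ + ℓ₂, b₁ + b₂), ?_⟩
  ext x
  simp only [LinearMap.add_apply, Pi.mul_apply, ← Real.exp_add]
  ring_nf

noncomputable def expRidgeSubalgebra (E : Type*) [AddCommGroup E] [Module ℝ E] :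
    Subalgebra ℝ (E → ℝ) :=
  (ridgeSpan Real.exp E).toSubalgebra
    (by convert ridge_mem_ridgeSpan Real.exp (0 : Module.Dual ℝ E) 0; simp)
    (fun _ _ => ridgeSpan_exp_mul_mem)

section Density

variable {E : Type*} [NormedAddCommGroup E] [NormedSpace ℝ E] [FiniteDimensional ℝ E]

theorem ridgeSpan_exp_le_uniformClosureOn {U : Set E} (hU : IsCompact U) :
    ridgeSpan Real.exp E ≤ (ridgeSpan relu E).uniformClosureOn U := by
  refine Submodule.span_le.2 ?_
  rintro _ ⟨⟨ℓ, b⟩, rfl⟩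
  obtain ⟨C, hC⟩ := hU.exists_bound_of_continuousOn
    ((LinearMap.continuous_of_finiteDimensional ℓ).add continuous_const).continuousOn
  exact comp_add_mem_uniformClosureOn_ridgeSpan ℓ b (fun x hx => abs_le.1 (hC x hx))
    (mem_uniformClosureOn_ridgeSpan_relu_Icc Real.continuous_exp.continuousOn)

theorem mem_uniformClosureOn_ridgeSpan_exp {U : Set E} (hU : IsCompact U) {g : E → ℝ}
    (hg : ContinuousOn g U) : g ∈ (ridgeSpan Real.exp E).uniformClosureOn U := by
  intro δ hδ
  have : CompactSpace U := isCompact_iff_compactSpace.1 hU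
  let restrictU : (E → ℝ) →ₐ[ℝ] (U → ℝ) := AlgHom.pi fun x => Pi.evalAlgHom ℝ (fun _ => ℝ) x.1
  let A : Subalgebra ℝ C(U, ℝ) :=
    ((expRidgeSubalgebra E).map restrictU).comap (ContinuousMap.coeFnAlgHom ℝ)
  have hA : A.SeparatesPoints := by
    intro x y hxy
    obtain ⟨ℓ, hℓ⟩ : ∃ ℓ : Module.Dual ℝ E, ℓ x ≠ ℓ y := by
      by_contra! h
      refine hxy (Subtype.ext (sub_eq_zero.1 ?_))
      exact (Module.forall_dual_apply_eq_zero_iff ℝ _).1 fun ℓ => by rw [map_sub, h, sub_self]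
    have hℓc := LinearMap.continuous_of_finiteDimensional ℓ
    refine ⟨_, ⟨⟨fun z => Real.exp (ℓ z), by fun_prop⟩,
      ⟨_, ridge_mem_ridgeSpan Real.exp ℓ 0, by ext; simp [restrictU]⟩, rfl⟩, ?_⟩
    simpa using hℓ
  obtain ⟨⟨a, ha⟩, hag⟩ := ContinuousMap.exists_mem_subalgebra_near_continuousMap_of_separatesPoints
    A hA ⟨U.domRestrict g, hg.domRestrict⟩ δ hδ
  obtain ⟨f, hf, hfa⟩ := Subalgebra.mem_map.1 ha
  refine ⟨f, hf, fun x hx => ?_⟩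
  have hfx : f x = a ⟨x, hx⟩ := congrFun hfa ⟨x, hx⟩
  have hax := (ContinuousMap.norm_coe_le_norm _ ⟨x, hx⟩).trans_lt hag
  rwa [hfx, abs_sub_comm]

theorem mem_uniformClosureOn_ridgeSpan_relu {U : Set E} (hU : IsCompact U) {g : E → ℝ}
    (hg : ContinuousOn g U) : g ∈ (ridgeSpan relu E).uniformClosureOn U :=
  Submodule.uniformClosureOn_le_of_le (ridgeSpan_exp_le_uniformClosureOn hU)
    (mem_uniformClosureOn_ridgeSpan_exp hU hg)

end Density

section Networks

variable {ι κ κ' m : Type*} [Fintype ι] [Fintype κ] [Fintype κ']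

def shallowNet (σ : ℝ → ℝ) (A : Matrix m κ ℝ) (B : Matrix κ ι ℝ) (b : κ → ℝ) (x : ι → ℝ) :
    m → ℝ :=
  A *ᵥ fun k => σ ((B *ᵥ x) k + b k)

theorem exists_dotProduct_eq_of_mem_ridgeSpan [DecidableEq ι] {σ : ℝ → ℝ} {f : (ι → ℝ) → ℝ}
    (hf : f ∈ ridgeSpan σ (ι → ℝ)) :
    ∃ (n : ℕ) (c : Fin n → ℝ) (W : Matrix (Fin n) ι ℝ) (β : Fin n → ℝ),
      ∀ x, f x = c ⬝ᵥ fun j => σ ((W *ᵥ x) j + β j) := by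
  obtain ⟨n, c, g, rfl⟩ := Submodule.mem_span_set'.1 hf
  choose p hp using fun j => (g j).2
  refine ⟨n, c, Matrix.of fun j i => (p j).1 fun k => if i = k then 1 else 0, fun j => (p j).2,
    fun x => ?_⟩
  simp only [Finset.sum_apply, Pi.smul_apply, smul_eq_mul, dotProduct, ← hp, mulVec, of_apply]
  simp only [LinearMap.pi_apply_eq_sum_univ (p _).1 x, smul_eq_mul, mul_comm (x _)]

theorem exists_shallowNet_eq_of_forall_mem_ridgeSpan [Fintype m] [DecidableEq ι] {σ : ℝ → ℝ}
    {f : m → (ι → ℝ) → ℝ} (hf : ∀ p, f p ∈ ridgeSpan σ (ι → ℝ)) :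
    ∃ (n : m → ℕ) (A : Matrix m (Σ p, Fin (n p)) ℝ) (B : Matrix (Σ p, Fin (n p)) ι ℝ)
      (b : (Σ p, Fin (n p)) → ℝ), ∀ x p, shallowNet σ A B b x p = f p x := by
  classical
  choose n c W β hfW using fun p => exists_dotProduct_eq_of_mem_ridgeSpan (hf p)
  refine ⟨n, of fun p k => if k.1 = p then c k.1 k.2 else 0, of fun k => W k.1 k.2,
    fun k => β k.1 k.2, fun x p => ?_⟩
  simp [shallowNet, hfW, mulVec, dotProduct, Fintype.sum_sigma, ite_mul]

theorem rank_fromCols_one {R : Type*} [Field R] [Fintype m] [DecidableEq m] (A : Matrix m κ R) :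
    (A.fromCols (1 : Matrix m m R)).rank = Fintype.card m := by
  have hsurj : Function.Surjective (A.fromCols (1 : Matrix m m R)).mulVecLin := fun v =>
    ⟨Sum.elim 0 v, by simp [fromCols_mulVec]⟩
  rw [rank, LinearMap.range_eq_top.2 hsurj, finrank_top, Module.finrank_fintype_fun_eq_card]

theorem shallowNet_fromCols_one [Fintype m] [DecidableEq m] {σ : ℝ → ℝ} (hσ : σ 0 = 0)
    (A : Matrix m κ ℝ) (B : Matrix κ ι ℝ) (b : κ → ℝ) :
    shallowNet σ (A.fromCols (1 : Matrix m m ℝ)) (B.fromRows (0 : Matrix m ι ℝ)) (Sum.elim b 0) =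
      shallowNet σ A B b := by
  ext x p
  simp [shallowNet, fromCols_mulVec, fromRows_mulVec, Function.comp_def, hσ]

theorem shallowNet_submatrix (σ : ℝ → ℝ) (A : Matrix m κ ℝ) (B : Matrix κ ι ℝ) (b : κ → ℝ)
    (e : κ' ≃ κ) :
    shallowNet σ (A.submatrix id e) (B.submatrix e id) (b ∘ e) = shallowNet σ A B b := by
  ext x p
  simp only [shallowNet, mulVec, dotProduct, submatrix_apply, id, Function.comp_apply]
  exact e.sum_comp fun k => A p k * σ ((∑ i, B k i * x i) + b k)

theorem exists_shallowNet_rank_eq_card [Fintype m] [DecidableEq m] {σ : ℝ → ℝ} (hσ : σ 0 = 0)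
    (A : Matrix m κ ℝ) (B : Matrix κ ι ℝ) (b : κ → ℝ) :
    ∃ (n : ℕ) (A' : Matrix m (Fin n) ℝ) (B' : Matrix (Fin n) ι ℝ) (b' : Fin n → ℝ),
      Fintype.card m ≤ n ∧ A'.rank = Fintype.card m ∧
      shallowNet σ A' B' b' = shallowNet σ A B b := by
  let e := (Fintype.equivFin (κ ⊕ m)).symm
  refine ⟨_, (A.fromCols 1).submatrix id e, (B.fromRows 0).submatrix e id, Sum.elim b 0 ∘ e,
    by simp, (rank_submatrix _ (Equiv.refl m) e).trans (rank_fromCols_one A), ?_⟩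
  rw [shallowNet_submatrix, shallowNet_fromCols_one hσ]

end Networks

theorem universal_approx_full_rank_output_general
    (d l : ℕ)
    (U : Set (Fin d → ℝ)) (hU : IsCompact U)
    (h : (Fin d → ℝ) → Fin l → ℝ) (hh : Continuous h)
    (ε : ℝ) (hε : 0 < ε) :
    ∃ (n : ℕ) (A : Matrix (Fin l) (Fin n) ℝ) (B : Matrix (Fin n) (Fin d) ℝ) (b : Fin n → ℝ),
      l ≤ n ∧ A.rank = l ∧
      (∫ x in U, ∑ p, |h x p - A.mulVec (fun i => relu (B.mulVec x i + b i)) p|) ≤ ε := by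
  obtain ⟨δ, hδ, hδε⟩ := exists_pos_mul_lt hε (l * volume.real U)
  have hclose (p : Fin l) : ∃ f ∈ ridgeSpan relu (Fin d → ℝ), ∀ x ∈ U, |h x p - f x| < δ :=
    mem_uniformClosureOn_ridgeSpan_relu hU ((continuous_apply p).comp hh).continuousOn δ hδ
  choose f hf hhf using hclose
  obtain ⟨_, A₀, B₀, b₀, hN₀⟩ := exists_shallowNet_eq_of_forall_mem_ridgeSpan hf
  obtain ⟨n, A, B, b, hn, hA, hN⟩ :=
    exists_shallowNet_rank_eq_card (relu_of_nonpos le_rfl) A₀ B₀ b₀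
  refine ⟨n, A, B, b, by simpa using hn, by simpa using hA, ?_⟩
  have hpt : ∀ x ∈ U, ‖∑ p, |h x p - shallowNet relu A B b x p|‖ ≤ l * δ := fun x hx => by
    rw [Real.norm_of_nonneg (sum_nonneg fun p _ => abs_nonneg _)]
    calc ∑ p, |h x p - shallowNet relu A B b x p| ≤ ∑ _p : Fin l, δ := by
          simp only [hN, hN₀]; exact sum_le_sum fun p _ => (hhf p x hx).le
      _ = l * δ := by simp
  calc _ ≤ ‖∫ x in U, ∑ p, |h x p - shallowNet relu A B b x p|‖ := Real.le_norm_self _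
    _ ≤ l * δ * volume.real U := norm_setIntegral_le_of_norm_le_const hU.measure_lt_top hpt
    _ ≤ ε := by linarith

/-- Universal approximation with full-rank output matrix: any continuous `h : ℝ^d → ℝ^l`
can be approximated on a compact `U` to within `ε` in `L¹` (with the ℓ¹ norm on the
output) by a one-hidden-layer ReLU network with `n ≥ l` hidden units whose output matrix
`A` has rank `l`. -/
theorem universal_approx_full_rank_output
    (d l : ℕ) (hd : 1 ≤ d) (hl : 1 ≤ l)
    (U : Set (Fin d → ℝ)) (hU : IsCompact U)
    (h : (Fin d → ℝ) → Fin l → ℝ) (hh : Continuous h)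
    (ε : ℝ) (hε : 0 < ε) :
    ∃ (n : ℕ) (A : Matrix (Fin l) (Fin n) ℝ) (B : Matrix (Fin n) (Fin d) ℝ) (b : Fin n → ℝ),
      l ≤ n ∧ A.rank = l ∧
      (∫ x in U, ∑ p, |h x p - A.mulVec (fun i => relu (B.mulVec x i + b i)) p|) ≤ ε :=
  universal_approx_full_rank_output_general d l U hU h hh ε hε
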